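/- arXiv:1207.6959 — 4 statements merged into one kernel-verified Lean document; each statement's English description precedes it below -/
import Mathlib

section
/- Let p be an odd prime and let f ∈ F_p[X] be a monic irreducible polynomial of degree n with f ∉ {X, X−1, X+1}. Let K be an algebraic closure of F_p and let α ∈ K be a root of f. Suppose the set of roots of f in K is NOT closed under inversion (i.e., some root β of f has β⁻¹ not a root of f). Then the minimal polynomial of (α + α⁻¹)/2 over F_p has degree n. -/
open Polynomial
variable {p : ℕ} [Fact p.Prime]


noncomputable def frobAlg (p : ℕ) [Fact p.Prime] (j : ℕ) :
    AlgebraicClosure (ZMod p) →ₐ[ZMod p] AlgebraicClosure (ZMod p) :=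
  { iterateFrobenius _ p j with
    commutes' := fun r => RingHom.congr_fun
      (Subsingleton.elim ((iterateFrobenius _ p j).comp (algebraMap (ZMod p) _))
        (algebraMap (ZMod p) _)) r }

lemma frobAlg_apply (p : ℕ) [Fact p.Prime] (j : ℕ) (x : AlgebraicClosure (ZMod p)) :
    frobAlg p j x = x ^ p ^ j := rfl

lemma minpoly_natDegree_le (x : AlgebraicClosure (ZMod p)) {j : ℕ} (hj : 0 < j)
    (hx : x ^ p ^ j = x) : (minpoly (ZMod p) x).natDegree ≤ j := by
  classical
  have hp : p.Prime := Fact.out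
  have hint : IsIntegral (ZMod p) x := Algebra.IsIntegral.isIntegral x
  haveI := IntermediateField.adjoin.finiteDimensional hint
  haveI : Finite (IntermediateField.adjoin (ZMod p) {x}) :=
    Module.finite_of_finite (ZMod p)
  haveI : Fintype (IntermediateField.adjoin (ZMod p) {x}) := Fintype.ofFinite _
  set E := IntermediateField.adjoin (ZMod p) {x}
  have hcard : Fintype.card E = p ^ (minpoly (ZMod p) x).natDegree := by
    rw [Module.card_eq_pow_finrank (K := ZMod p), IntermediateField.adjoin.finrank hint, ZMod.card]
  -- every element of E is fixed
  have hfix : ∀ z : E, (z : AlgebraicClosure (ZMod p)) ^ p ^ j = z := by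
    have hle : Algebra.adjoin (ZMod p) {x} ≤ AlgHom.equalizer (frobAlg p j) (AlgHom.id _ _) := by
      apply Algebra.adjoin_le
      intro y hy
      rw [Set.mem_singleton_iff] at hy
      subst hy
      show frobAlg p j y = y
      rw [frobAlg_apply, hx]
    intro z
    have hz : (z : AlgebraicClosure (ZMod p)) ∈ Algebra.adjoin (ZMod p) {x} := by
      have h2 : (z : AlgebraicClosure (ZMod p)) ∈ E.toSubalgebra := z.2
      rwa [IntermediateField.adjoin_simple_toSubalgebra_of_isAlgebraic hint.isAlgebraic] at h2
    have := hle hz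
    simpa [frobAlg_apply] using this
  -- polynomial with these roots
  set g : (AlgebraicClosure (ZMod p))[X] := X ^ p ^ j - X with hg
  have hpj : 1 < p ^ j := Nat.one_lt_pow hj.ne' hp.one_lt
  have hgne : g ≠ 0 := by
    intro h
    have : g.coeff (p ^ j) = 1 := by
      rw [hg, coeff_sub, coeff_X_pow, coeff_X, if_pos rfl, if_neg (by omega : ¬ 1 = p ^ j)]
      ring
    rw [h] at this
    simp at this
  have hdegg : g.natDegree ≤ p ^ j := by
    refine le_trans (natDegree_sub_le _ _) (max_le ?_ ?_)
    · simp
    · simpa using hpj.le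
  have hroots : ∀ z : E, (z : AlgebraicClosure (ZMod p)) ∈ g.roots := by
    intro z
    rw [mem_roots hgne]
    simp [hg, IsRoot, hfix z]
  have hinj : Function.Injective (fun z : E => (z : AlgebraicClosure (ZMod p))) :=
    Subtype.val_injective
  have hsub : Finset.univ.image (fun z : E => (z : AlgebraicClosure (ZMod p))) ⊆ g.roots.toFinset := by
    intro y hy
    rcases Finset.mem_image.mp hy with ⟨z, _, rfl⟩
    exact Multiset.mem_toFinset.mpr (hroots z)
  have hcardle : Fintype.card E ≤ p ^ j := by
    calc Fintype.card E = (Finset.univ.image (fun z : E => (z : AlgebraicClosure (ZMod p)))).card := by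
          rw [Finset.card_image_of_injective _ hinj, Finset.card_univ]
      _ ≤ g.roots.toFinset.card := Finset.card_le_card hsub
      _ ≤ Multiset.card g.roots := Multiset.toFinset_card_le _
      _ ≤ g.natDegree := g.card_roots'
      _ ≤ p ^ j := hdegg
  rw [hcard] at hcardle
  exact (Nat.pow_le_pow_iff_right hp.one_lt).mp hcardle

lemma pow_card_minpoly (x : AlgebraicClosure (ZMod p)) :
    x ^ p ^ (minpoly (ZMod p) x).natDegree = x := by
  have hint : IsIntegral (ZMod p) x := Algebra.IsIntegral.isIntegral x
  haveI := IntermediateField.adjoin.finiteDimensional hint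
  haveI : Finite (IntermediateField.adjoin (ZMod p) {x}) :=
    Module.finite_of_finite (ZMod p)
  haveI : Fintype (IntermediateField.adjoin (ZMod p) {x}) := Fintype.ofFinite _
  have hcard : Fintype.card (IntermediateField.adjoin (ZMod p) {x}) =
      p ^ (minpoly (ZMod p) x).natDegree := by
    rw [Module.card_eq_pow_finrank (K := ZMod p), IntermediateField.adjoin.finrank hint, ZMod.card]
  have hmem : x ∈ IntermediateField.adjoin (ZMod p) {x} :=
    IntermediateField.mem_adjoin_simple_self _ x
  have := FiniteField.pow_card (⟨x, hmem⟩ : IntermediateField.adjoin (ZMod p) {x})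
  rw [hcard] at this
  have := congrArg (Subtype.val) this
  push_cast at this
  simpa using this



lemma coeff_zero_ne (f : (ZMod p)[X]) (hmonic : f.Monic) (hirr : Irreducible f)
    (hX : f ≠ X) : f.coeff 0 ≠ 0 := by
  intro h
  have hdvd : X ∣ f := X_dvd_iff.mpr h
  obtain ⟨c, hc⟩ := hdvd
  rcases hirr.isUnit_or_isUnit hc with h1 | h2
  · exact not_isUnit_X h1
  · obtain ⟨u, hu⟩ := h2
    apply hX
    rw [hc, ← hu]
    have hlc : (c : (ZMod p)[X]).leadingCoeff = 1 := by
      have h3 := hmonic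
      rw [hc] at h3
      have := h3
      unfold Monic at this
      rw [leadingCoeff_mul] at this
      simpa using this
    rcases Polynomial.isUnit_iff.mp ⟨u, hu⟩ with ⟨a, ha, hac⟩
    rw [hu, ← hac]
    rw [← hac] at hlc
    simp only [leadingCoeff_C] at hlc
    rw [hlc]
    simp

lemma root_ne_zero {f : (ZMod p)[X]} (h0 : f.coeff 0 ≠ 0) {β : AlgebraicClosure (ZMod p)}
    (hβ : aeval β f = 0) : β ≠ 0 := by
  intro h
  subst h
  rw [aeval_def, eval₂_at_zero] at hβ
  exact h0 ((_root_.map_eq_zero _).mp hβ)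

lemma inv_closed {f : (ZMod p)[X]} (hmonic : f.Monic) (hirr : Irreducible f)
    (hX : f ≠ X) {α : AlgebraicClosure (ZMod p)} (hα : aeval α f = 0)
    (hinv : aeval α⁻¹ f = 0) {β : AlgebraicClosure (ZMod p)} (hβ : aeval β f = 0) :
    aeval β⁻¹ f = 0 := by
  have h0 := coeff_zero_ne f hmonic hirr hX
  have hα0 : α ≠ 0 := root_ne_zero h0 hα
  have hβ0 : β ≠ 0 := root_ne_zero h0 hβ
  have hfmin : f = minpoly (ZMod p) α⁻¹ :=
    minpoly.eq_of_irreducible_of_monic hirr hinv hmonic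
  -- reverse f has root α⁻¹
  haveI : Invertible α := invertibleOfNonzero hα0
  have hrev : aeval α⁻¹ f.reverse = 0 := by
    rw [← invOf_eq_inv, aeval_def, eval₂_reverse_eq_zero_iff, ← aeval_def]
    exact hα
  have hdvd : f ∣ f.reverse := by
    have h5 := minpoly.dvd (ZMod p) α⁻¹ hrev
    rwa [← hfmin] at h5
  obtain ⟨q, hq⟩ := hdvd
  have hfne : f ≠ 0 := hmonic.ne_zero
  have hrne : f.reverse ≠ 0 := fun h => hfne (reverse_eq_zero.mp h)
  have hqne : q ≠ 0 := by rintro rfl; simp [hq] at hrne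
  have hqdeg : q.natDegree = 0 := by
    have h1 : f.reverse.natDegree ≤ f.natDegree := reverse_natDegree_le f
    have h2 : f.reverse.natDegree = f.natDegree + q.natDegree := by
      rw [hq, natDegree_mul hfne hqne]
    omega
  obtain ⟨c, hc⟩ := natDegree_eq_zero.mp hqdeg
  have hcne : c ≠ 0 := by rintro rfl; simp [← hc] at hqne
  haveI : Invertible β := invertibleOfNonzero hβ0
  have hrevβ : aeval β⁻¹ f.reverse = 0 := by
    rw [← invOf_eq_inv, aeval_def, eval₂_reverse_eq_zero_iff, ← aeval_def]
    exact hβ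
  rw [hq, ← hc, map_mul, aeval_C, mul_eq_zero] at hrevβ
  rcases hrevβ with h | h
  · exact h
  · exact absurd ((_root_.map_eq_zero _).mp h) hcne

/-- Let `p` be an odd prime, `f ∈ F_p[X]` monic irreducible of degree `n` with
`f ∉ {X, X−1, X+1}`, and `α` a root of `f` in an algebraic closure of `F_p`.
If the set of roots of `f` is not closed under inversion, then the minimal polynomial
of `(α + α⁻¹)/2` over `F_p` has degree `n`. -/
theorem minpoly_theta_degree_of_not_inverse_closed (p : ℕ) [Fact p.Prime] (hodd : Odd p)
    (f : Polynomial (ZMod p)) (n : ℕ) (hmonic : f.Monic) (hirr : Irreducible f)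
    (hdeg : f.natDegree = n)
    (hX : f ≠ X) (hXsub : f ≠ X - 1) (hXadd : f ≠ X + 1)
    (α : AlgebraicClosure (ZMod p)) (hα : Polynomial.aeval α f = 0)
    (hnot : ∃ β : AlgebraicClosure (ZMod p),
      Polynomial.aeval β f = 0 ∧ Polynomial.aeval β⁻¹ f ≠ 0) :
    (minpoly (ZMod p) ((α + α⁻¹) / 2)).natDegree = n := by
  have hp : p.Prime := Fact.out
  have hpne2 : p ≠ 2 := by
    rintro rfl
    exact (Nat.not_odd_iff_even.mpr even_two) hodd
  have htwo : (2 : AlgebraicClosure (ZMod p)) ≠ 0 := by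
    have h2z : (2 : ZMod p) ≠ 0 := by
      have h2n : ((2 : ℕ) : ZMod p) ≠ 0 := by
        rw [Ne, ZMod.natCast_eq_zero_iff]
        intro hdvd
        exact hpne2 ((Nat.prime_dvd_prime_iff_eq hp Nat.prime_two).mp hdvd)
      exact_mod_cast h2n
    have h2a : (2 : AlgebraicClosure (ZMod p)) =
        algebraMap (ZMod p) (AlgebraicClosure (ZMod p)) 2 := by
      rw [map_ofNat]
    rw [h2a]
    exact fun h => h2z ((_root_.map_eq_zero _).mp h)
  have hnpos : 0 < n := hdeg ▸ hirr.natDegree_pos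
  have hα0 : α ≠ 0 := root_ne_zero (coeff_zero_ne f hmonic hirr hX) hα
  have hfmin : minpoly (ZMod p) α = f :=
    (minpoly.eq_of_irreducible_of_monic hirr hα hmonic).symm
  set θ : AlgebraicClosure (ZMod p) := (α + α⁻¹) / 2 with hθ
  set m := (minpoly (ZMod p) θ).natDegree with hm
  have hmpos : 0 < m := minpoly.natDegree_pos (Algebra.IsIntegral.isIntegral θ)
  have h2pow : ∀ j : ℕ, (2 : AlgebraicClosure (ZMod p)) ^ p ^ j = 2 := by
    intro j
    have : (2 : AlgebraicClosure (ZMod p)) = (1 : AlgebraicClosure (ZMod p)) + 1 := by norm_num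
    rw [this, add_pow_char_pow, one_pow]
  have hθpow : ∀ j : ℕ, θ ^ p ^ j = (α ^ p ^ j + (α ^ p ^ j)⁻¹) / 2 := by
    intro j
    rw [hθ, div_pow, add_pow_char_pow, inv_pow, h2pow]
  -- m ≤ n
  have hαn : α ^ p ^ n = α := by
    have := pow_card_minpoly α  -- needs import of helper; inline later
    rw [hfmin, hdeg] at this
    exact this
  have hmn : m ≤ n := by
    apply minpoly_natDegree_le θ hnpos
    rw [hθpow n, hαn, ← hθ]
  -- n ≤ m
  have hθm : θ ^ p ^ m = θ := pow_card_minpoly θ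
  set b : AlgebraicClosure (ZMod p) := α ^ p ^ m with hb
  have hb0 : b ≠ 0 := pow_ne_zero _ hα0
  have hbroot : aeval b f = 0 := by
    have := Polynomial.aeval_algHom_apply (frobAlg p m) α f
    rw [hα, map_zero] at this
    rw [hb, ← frobAlg_apply p m α]
    exact this
  have hsum : α + α⁻¹ = b + b⁻¹ := by
    have h1 : (α + α⁻¹) / 2 = (b + b⁻¹) / 2 := by
      rw [← hθ, ← hθm, hθpow m, hb]
    have h2 := congrArg (fun z => z * 2) h1
    simpa [div_mul_cancel₀, htwo] using h2
  have hfactor : (b - α) * (b - α⁻¹) = 0 := by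
    calc (b - α) * (b - α⁻¹) = b * b - b * (α + α⁻¹) + α * α⁻¹ := by ring
      _ = b * b - b * (b + b⁻¹) + 1 := by rw [hsum, mul_inv_cancel₀ hα0]
      _ = b * b - (b * b + b * b⁻¹) + 1 := by ring
      _ = b * b - (b * b + 1) + 1 := by rw [mul_inv_cancel₀ hb0]
      _ = 0 := by ring
  rcases mul_eq_zero.mp hfactor with h | h
  · -- b = α
    have hbα : b = α := by rwa [sub_eq_zero] at h
    have hnm : n ≤ m := by
      have := minpoly_natDegree_le α hmpos (by rw [← hb]; exact hbα)
      rwa [hfmin, hdeg] at this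
    omega
  · -- b = α⁻¹ : contradiction
    exfalso
    have hbα : b = α⁻¹ := by rwa [sub_eq_zero] at h
    have hinv : aeval α⁻¹ f = 0 := hbα ▸ hbroot
    obtain ⟨β, hβ, hβinv⟩ := hnot
    exact hβinv (inv_closed hmonic hirr hX hα hinv hβ)
end

section
/- Let p be an odd prime and let f ∈ F_p[X] be a monic irreducible polynomial of degree n with f ∉ {X, X−1, X+1}. Let K be an algebraic closure of F_p and let α ∈ K be a root of f. Suppose the set of roots of f in K IS closed under inversion (i.e., β⁻¹ is a root of f for every root β of f). Then n is even and the minimal polynomial of (α + α⁻¹)/2 over F_p has degree n/2. -/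
open Polynomial

open IntermediateField in
/-- Auxiliary: a finset of roots of a nonzero polynomial has card at most the degree. -/
lemma aux_card_le_natDegree {L : Type*} [Field L] {S : Finset L} {g : L[X]}
    (hg : g ≠ 0) (h : ∀ x ∈ S, g.IsRoot x) : S.card ≤ g.natDegree := by
  classical
  have h1 : S ⊆ g.roots.toFinset := fun x hx =>
    Multiset.mem_toFinset.mpr (Polynomial.mem_roots'.mpr ⟨hg, h x hx⟩)
  calc S.card ≤ g.roots.toFinset.card := Finset.card_le_card h1
    _ ≤ Multiset.card g.roots := g.roots.toFinset_card_le
    _ ≤ g.natDegree := g.card_roots'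

set_option maxHeartbeats 1600000 in
set_option synthInstance.maxHeartbeats 400000 in
/-- Let `p` be an odd prime, `f ∈ F_p[X]` monic irreducible of degree `n` with
`f ∉ {X, X−1, X+1}`, and `α` a root of `f` in an algebraic closure of `F_p`.
If the set of roots of `f` is closed under inversion, then `n` is even and the
minimal polynomial of `(α + α⁻¹)/2` over `F_p` has degree `n/2`. -/
theorem minpoly_theta_degree_of_inverse_closed (p : ℕ) [Fact p.Prime] (hodd : Odd p)
    (f : Polynomial (ZMod p)) (n : ℕ) (hmonic : f.Monic) (hirr : Irreducible f)
    (hdeg : f.natDegree = n)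
    (hX : f ≠ X) (hXsub : f ≠ X - 1) (hXadd : f ≠ X + 1)
    (α : AlgebraicClosure (ZMod p)) (hα : Polynomial.aeval α f = 0)
    (hclosed : ∀ β : AlgebraicClosure (ZMod p),
      Polynomial.aeval β f = 0 → Polynomial.aeval β⁻¹ f = 0) :
    Even n ∧ (minpoly (ZMod p) ((α + α⁻¹) / 2)).natDegree = n / 2 := by
  classical
  open IntermediateField in
  have hp2 : p ≠ 2 := by rintro rfl; rcases hodd with ⟨j, hj⟩; omega
  have hp1 : 1 < p := (Fact.out : p.Prime).one_lt
  -- f is the minimal polynomial of α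
  have hf : minpoly (ZMod p) α = f := (minpoly.eq_of_irreducible_of_monic hirr hα hmonic).symm
  have hint : IsIntegral (ZMod p) α := ⟨f, hmonic, by rwa [← aeval_def]⟩
  have hn0 : 0 < n := by
    have := minpoly.natDegree_pos hint
    rwa [hf, hdeg] at this
  -- α is not 0, 1, -1
  have hα0 : α ≠ 0 := by rintro rfl; exact hX (by rw [← hf, minpoly.zero])
  have hα1 : α ≠ 1 := by rintro rfl; exact hXsub (by rw [← hf, minpoly.one])
  have hαm1 : α ≠ -1 := by
    rintro rfl
    apply hXadd
    have h1 : (-1 : AlgebraicClosure (ZMod p)) = algebraMap (ZMod p) (AlgebraicClosure (ZMod p)) (-1) := by simp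
    rw [← hf, h1, minpoly.eq_X_sub_C, map_neg, map_one, sub_neg_eq_add]
  -- The field F = F_p(α)
  set F : IntermediateField (ZMod p) (AlgebraicClosure (ZMod p)) := (ZMod p)⟮α⟯ with hF
  haveI : FiniteDimensional (ZMod p) F := IntermediateField.adjoin.finiteDimensional hint
  haveI : Finite F := Module.finite_of_finite (ZMod p)
  haveI : Fintype F := Fintype.ofFinite F
  haveI : CharP F p := charP_of_injective_algebraMap (algebraMap (ZMod p) F).injective p
  have hrank : Module.finrank (ZMod p) F = n := by
    rw [IntermediateField.adjoin.finrank hint, hf, hdeg]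
  have hcardF : Fintype.card F = p ^ n := by
    rw [Module.card_eq_pow_finrank (K := ZMod p) (V := F), ZMod.card, hrank]
  set a : F := IntermediateField.AdjoinSimple.gen (ZMod p) α with haDef
  have ha : (a : AlgebraicClosure (ZMod p)) = α := rfl
  have hinj : Function.Injective (algebraMap F (AlgebraicClosure (ZMod p))) := (algebraMap F (AlgebraicClosure (ZMod p))).injective
  have hminA : minpoly (ZMod p) a = f := by
    rw [← hf, ← minpoly.algebraMap_eq hinj a]; rfl
  have ha0 : a ≠ 0 := by
    intro h; apply hα0; rw [← ha, h]; simp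
  -- b = a⁻¹ is a root of f too
  set b : F := a⁻¹ with hbDef
  have hb : (b : AlgebraicClosure (ZMod p)) = α⁻¹ := by
    rw [hbDef]; rfl
  have hb_root : Polynomial.aeval b f = 0 := by
    have h2 : Polynomial.aeval ((algebraMap F (AlgebraicClosure (ZMod p))) b) f = 0 := by
      rw [show (algebraMap F (AlgebraicClosure (ZMod p))) b = α⁻¹ from hb]; exact hclosed α hα
    rwa [Polynomial.aeval_algebraMap_apply, map_eq_zero_iff _ hinj] at h2
  -- the automorphism σ sending a to b
  set pb := IntermediateField.adjoin.powerBasis hint with hpb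
  have hpbgen : pb.gen = a := rfl
  have hliftroot : Polynomial.aeval b (minpoly (ZMod p) pb.gen) = 0 := by
    rw [hpbgen, hminA]; exact hb_root
  set σ0 : F →ₐ[ZMod p] F := pb.lift b hliftroot with hσ0
  have hσ0bij : Function.Bijective σ0 :=
    (Finite.injective_iff_bijective).mp (σ0.toRingHom.injective)
  set σ : F ≃ₐ[ZMod p] F := AlgEquiv.ofBijective σ0 hσ0bij with hσdef
  have hσa : σ a = b := by
    show σ0 a = b
    rw [hσ0, ← hpbgen, PowerBasis.lift_gen]
  -- frobenius as an algebra equivalence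
  have hfrobcomm : ∀ r : ZMod p, frobenius F p (algebraMap (ZMod p) F r) = algebraMap (ZMod p) F r := by
    intro r
    rw [frobenius_def, ← map_pow, ZMod.pow_card]
  set φ0 : F →ₐ[ZMod p] F := { frobenius F p with commutes' := hfrobcomm } with hφ0
  set φ : F ≃ₐ[ZMod p] F :=
    AlgEquiv.ofBijective φ0 ((Finite.injective_iff_bijective).mp (φ0.toRingHom.injective)) with hφdef
  have hφ : ∀ x : F, φ x = x ^ p := fun x => rfl
  have hφpow : ∀ (k : ℕ) (x : F), (φ ^ k) x = x ^ p ^ k := by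
    intro k
    induction k with
    | zero => intro x; simp
    | succ k ih =>
      intro x
      rw [pow_succ, AlgEquiv.mul_apply, ih (φ x), hφ, ← pow_mul, ← pow_succ']
  have hφn : φ ^ n = 1 := by
    ext x
    rw [hφpow n x, ← hcardF, FiniteField.pow_card]
    rfl
  -- the order of φ is exactly n
  have horder : orderOf φ = n := by
    have hfin : IsOfFinOrder φ := isOfFinOrder_iff_pow_eq_one.mpr ⟨n, hn0, hφn⟩
    have hd : orderOf φ ∣ n := orderOf_dvd_of_pow_eq_one hφn
    have hdn : orderOf φ ≤ n := Nat.le_of_dvd hn0 hd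
    have hnd : n ≤ orderOf φ := by
      set d := orderOf φ with hdDef
      have hd0 : 0 < d := hfin.orderOf_pos
      by_contra hlt
      push_neg at hlt
      -- every element of F is a root of X^(p^d) - X
      set g : Polynomial F := X ^ p ^ d - X with hg
      have hdegg : g.natDegree = p ^ d := by
        rw [hg]
        rw [natDegree_sub_eq_left_of_natDegree_lt] <;>
          simp [Nat.one_lt_pow hd0.ne' hp1]
      have hgne : g ≠ 0 := fun h => by
        have hppos : (0:ℕ) < p ^ d := pow_pos (by omega) d
        rw [h, natDegree_zero] at hdegg
        omega
      have hroots : ∀ x ∈ (Finset.univ : Finset F), g.IsRoot x := by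
        intro x _
        have : (φ ^ d) x = x := by rw [pow_orderOf_eq_one]; rfl
        rw [hφpow] at this
        simp [hg, IsRoot, this]
      have := aux_card_le_natDegree hgne hroots
      rw [Finset.card_univ, hcardF, hdegg] at this
      exact absurd (Nat.pow_le_pow_iff_right hp1 |>.mp this) (by omega)
    omega
  -- the Galois group is generated by φ, so σ = φ^k
  have hcardGal : Nat.card (F ≃ₐ[ZMod p] F) = n := by
    rw [IsGalois.card_aut_eq_finrank, hrank]
  have htop : Subgroup.zpowers φ = ⊤ :=
    Subgroup.eq_top_of_card_eq _ (by rw [Nat.card_zpowers, horder, hcardGal])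
  obtain ⟨k0, hk0⟩ : ∃ k0 : ℕ, φ ^ k0 = σ := by
    have : σ ∈ Subgroup.zpowers φ := htop ▸ Subgroup.mem_top σ
    exact mem_powers_iff_mem_zpowers.mpr this
  set k := k0 % n with hkDef
  have hk : φ ^ k = σ := by
    rw [hkDef, ← horder, pow_mod_orderOf, hk0]
  have hkn : k < n := Nat.mod_lt _ hn0
  -- a^(p^k) = a⁻¹
  have hak : a ^ p ^ k = a⁻¹ := by
    rw [← hφpow, hk, hσa]
  -- k ≠ 0
  have hk0' : k ≠ 0 := by
    intro h
    rw [h, pow_zero, pow_one] at hak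
    have h2 : a * a = 1 := by
      nth_rewrite 2 [hak]
      exact mul_inv_cancel₀ ha0
    rcases mul_self_eq_one_iff.mp h2 with h3 | h3
    · exact hα1 (by rw [← ha, h3]; simp)
    · exact hαm1 (by rw [← ha, h3]; push_cast; simp)
  -- φ^(2k) = 1, hence n ∣ 2k, hence n = 2k
  have h2k : φ ^ (2 * k) = 1 := by
    have hfix : (φ ^ (2 * k)) a = a := by
      rw [hφpow, show 2 * k = k + k by ring, pow_add, pow_mul, hak, inv_pow, hak, inv_inv]
    have halg : ((φ ^ (2 * k)) : F ≃ₐ[ZMod p] F).toAlgHom = (AlgHom.id (ZMod p) F) :=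
      pb.algHom_ext (by rw [hpbgen]; exact hfix)
    refine AlgEquiv.ext fun x => ?_
    exact DFunLike.congr_fun halg x
  have hndvd : n ∣ 2 * k := horder ▸ orderOf_dvd_of_pow_eq_one h2k
  have hn2k : n = 2 * k := by
    obtain ⟨c, hc⟩ := hndvd
    rcases Nat.lt_or_ge c 2 with h | h
    · interval_cases c <;> omega
    · exfalso
      have h5 : n * 2 ≤ n * c := Nat.mul_le_mul_left n h
      omega
  refine ⟨⟨k, by omega⟩, ?_⟩
  -- now the element θ = (α + α⁻¹)/2 corresponds to t = (a + a⁻¹)/2 in F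
  set t : F := (a + a⁻¹) / 2 with htDef
  have htcoe : (t : AlgebraicClosure (ZMod p)) = (α + α⁻¹) / 2 := by
    rw [htDef]
    rfl
  have hmt : minpoly (ZMod p) ((α + α⁻¹) / 2) = minpoly (ZMod p) t := by
    rw [← htcoe, ← minpoly.algebraMap_eq hinj t]; rfl
  set m := (minpoly (ZMod p) t).natDegree with hmDef
  rw [hmt]
  -- σ fixes t
  have h2ne : (2 : F) ≠ 0 := by
    have : ((2 : ℕ) : F) ≠ 0 := by
      rw [Ne, CharP.cast_eq_zero_iff F p]
      intro hdvd
      have := Nat.le_of_dvd (by norm_num) hdvd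
      omega
    simpa using this
  have hσ2 : σ (2 : F) = 2 := by
    rw [show (2 : F) = algebraMap (ZMod p) F 2 from (map_ofNat _ 2).symm, AlgEquiv.commutes]
  have hσt : σ t = t := by
    rw [htDef, map_div₀, map_add, map_inv₀, hσa, hbDef, inv_inv, hσ2, add_comm]
  -- E = F_p(t)
  have htint : IsIntegral (ZMod p) t := IsIntegral.of_finite (ZMod p) t
  set E : IntermediateField (ZMod p) (↥F) := IntermediateField.adjoin (ZMod p) {t} with hE
  haveI : FiniteDimensional (ZMod p) ↥E := IntermediateField.adjoin.finiteDimensional htint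
  haveI : Fintype ↥E := Fintype.ofFinite ↥E
  have hrankE : Module.finrank (ZMod p) ↥E = m := IntermediateField.adjoin.finrank htint
  have hcardE : Fintype.card ↥E = p ^ m := by
    rw [Module.card_eq_pow_finrank (K := ZMod p) (V := ↥E), ZMod.card, hrankE]
  -- every element of E is fixed by σ, hence x^(p^k) = x
  have hEfix : ∀ x : ↥E, (x : ↥F) ^ p ^ k = (x : ↥F) := by
    have hstab : Subgroup.zpowers σ ≤ MulAction.stabilizer (↥F ≃ₐ[ZMod p] ↥F) t :=
      Subgroup.zpowers_le.mpr (by show σ • t = t; exact hσt)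
    have hle : E ≤ IntermediateField.fixedField (Subgroup.zpowers σ) := by
      rw [hE, IntermediateField.adjoin_le_iff]
      rintro x rfl
      exact fun g => MulAction.mem_stabilizer_iff.mp (hstab g.2)
    intro x
    have hx : σ (x : ↥F) = x := hle x.2 ⟨σ, Subgroup.mem_zpowers σ⟩
    rw [← hk] at hx
    rwa [hφpow] at hx
  -- upper bound : m ≤ k
  have hmk : m ≤ k := by
    set g : Polynomial ↥F := X ^ p ^ k - X with hg
    have hk0'' : 0 < k := Nat.pos_of_ne_zero hk0'
    have hdegg : g.natDegree = p ^ k := by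
      rw [hg, natDegree_sub_eq_left_of_natDegree_lt] <;>
        simp [Nat.one_lt_pow hk0''.ne' hp1]
    have hgne : g ≠ 0 := fun h => by
      have : (0:ℕ) < p ^ k := pow_pos (by omega) k
      rw [h, natDegree_zero] at hdegg
      omega
    set emb : ↥E ↪ ↥F := ⟨fun x => (x : ↥F), Subtype.val_injective⟩ with hemb
    have hroots : ∀ x ∈ Finset.univ.map emb, g.IsRoot x := by
      intro x hx
      obtain ⟨y, _, rfl⟩ := Finset.mem_map.mp hx
      simp only [hemb, Function.Embedding.coeFn_mk]
      simp [hg, IsRoot, hEfix y]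
    have hcard := aux_card_le_natDegree hgne hroots
    rw [Finset.card_map, Finset.card_univ, hcardE, hdegg] at hcard
    exact (Nat.pow_le_pow_iff_right hp1).mp hcard
  -- lower bound : n ≤ 2 * m
  haveI : FiniteDimensional ↥E ↥F := FiniteDimensional.right (ZMod p) ↥E ↥F
  have haint : IsIntegral ↥E a := IsIntegral.of_finite ↥E a
  have h2t : (2 : ↥F) * t = a + a⁻¹ := by
    rw [htDef, mul_div_cancel₀ _ h2ne]
  set t' : ↥E := IntermediateField.AdjoinSimple.gen (ZMod p) t with ht'
  have ht'c : (t' : ↥F) = t := rfl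
  set q : Polynomial ↥E := X ^ 2 - C (2 * t') * X + 1 with hq
  have hqdeg : q.natDegree = 2 := by rw [hq]; compute_degree!
  have hqne : q ≠ 0 := fun h => by rw [h, natDegree_zero] at hqdeg; omega
  have hq_root : Polynomial.aeval a q = 0 := by
    rw [hq]
    simp only [map_add, map_sub, map_pow, map_one, map_mul, Polynomial.aeval_X,
      Polynomial.aeval_C]
    rw [show (algebraMap ↥E ↥F) t' = t from rfl, map_ofNat, h2t]
    have hkey : (a + a⁻¹) * a = a ^ 2 + 1 := by
      rw [add_mul, inv_mul_cancel₀ ha0]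
      ring
    rw [hkey]
    ring
  have hminq : (minpoly ↥E a).natDegree ≤ 2 := by
    have h1 := Polynomial.natDegree_le_natDegree (minpoly.degree_le_of_ne_zero ↥E a hqne hq_root)
    omega
  have hEtop : IntermediateField.adjoin ↥E ({a} : Set ↥F) = ⊤ := by
    apply IntermediateField.adjoin_eq_top_of_adjoin_eq_top (ZMod p)
    have hsub := IntermediateField.algebra_adjoin_le_adjoin (ZMod p) ({a} : Set ↥F)
    have hgen : Algebra.adjoin (ZMod p) ({a} : Set ↥F) = ⊤ := by
      have := pb.adjoin_gen_eq_top
      rwa [hpbgen] at this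
    rw [eq_top_iff]
    intro x _
    exact hsub (hgen ▸ Algebra.mem_top)
  have hfinEF : Module.finrank ↥E ↥F ≤ 2 := by
    have h1 : Module.finrank ↥E ↥(IntermediateField.adjoin ↥E ({a} : Set ↥F)) =
        (minpoly ↥E a).natDegree := IntermediateField.adjoin.finrank haint
    rw [hEtop] at h1
    have h2 : Module.finrank ↥E ↥(⊤ : IntermediateField ↥E ↥F) = Module.finrank ↥E ↥F :=
      (IntermediateField.topEquiv).toLinearEquiv.finrank_eq
    rw [h2] at h1
    omega
  have hn2m : n ≤ 2 * m := by
    have hmulrank : Module.finrank (ZMod p) ↥E * Module.finrank ↥E ↥F =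
        Module.finrank (ZMod p) ↥F := Module.finrank_mul_finrank (ZMod p) ↥E ↥F
    rw [hrankE, hrank] at hmulrank
    nlinarith [hfinEF]
  omega
end

section
/- Let p be an odd prime and let f ∈ F_p[X] be a monic irreducible polynomial of degree n ≥ 1 with f ≠ X−1 and f ≠ X+1. If f^R is not irreducible in F_p[X], then there exists a nonzero element α of the field F_{p^n} with p^n elements such that f^R(α) = 0 and α is not θ-periodic. -/
open Polynomial

/-- The R-transform of a polynomial `f = Σ aᵢ Xⁱ` of degree `n` over a field of odd
characteristic: `f^R = Σ aᵢ (2X)^{n−i} (X²+1)ⁱ`. -/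
noncomputable def Rtransform {F : Type*} [Field F] (f : Polynomial F) : Polynomial F :=
  ∑ i ∈ Finset.range (f.natDegree + 1),
    C (f.coeff i) * (2 * X) ^ (f.natDegree - i) * (X ^ 2 + 1) ^ i

/-- The map `θ(x) = (x + x⁻¹)/2` on a field (with the convention `0⁻¹ = 0`). -/
noncomputable def theta {K : Type*} [Field K] (x : K) : K := (x + x⁻¹) / 2

/-- An element `x` is θ-periodic if `θ^[k](x) = x` for some `k ≥ 1`. -/
def IsThetaPeriodic {K : Type*} [Field K] (x : K) : Prop :=
  ∃ k : ℕ, 1 ≤ k ∧ theta^[k] x = x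




lemma aeval_Rtransform_eq {F A : Type*} [Field F] [CommRing A] [Algebra F A]
    (f : F[X]) {x a : A} (h : x ^ 2 + 1 = 2 * x * a) :
    aeval x (Rtransform f) = (2 * x) ^ f.natDegree * aeval a f := by
  rw [Rtransform, map_sum, aeval_eq_sum_range, Finset.mul_sum]
  refine Finset.sum_congr rfl fun i hi => ?_
  rw [Finset.mem_range, Nat.lt_succ_iff] at hi
  rw [map_mul, map_mul, map_pow, map_pow, map_mul, map_add, map_pow, map_one, aeval_X, aeval_C,
    map_ofNat, h, mul_pow, Algebra.smul_def,
    show f.natDegree = (f.natDegree - i) + i from (Nat.sub_add_cancel hi).symm, pow_add]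
  simp only [Nat.add_sub_cancel]
  ring




lemma Rtransform_eq_add {F : Type*} [Field F] (f : F[X]) (hm : f.Monic) :
    Rtransform f = (X ^ 2 + 1) ^ f.natDegree +
      ∑ i ∈ Finset.range f.natDegree,
        C (f.coeff i) * (2 * X) ^ (f.natDegree - i) * (X ^ 2 + 1) ^ i := by
  rw [Rtransform, Finset.sum_range_succ, hm.coeff_natDegree, map_one, one_mul, Nat.sub_self,
    pow_zero, one_mul, add_comm]

lemma Rtransform_tail_degree {F : Type*} [Field F] (f : F[X]) :
    (∑ i ∈ Finset.range f.natDegree,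
        C (f.coeff i) * (2 * X) ^ (f.natDegree - i) * (X ^ 2 + 1) ^ i).degree <
      ((2 * f.natDegree : ℕ) : WithBot ℕ) := by
  refine lt_of_le_of_lt (degree_sum_le _ _) ?_
  rw [Finset.sup_lt_iff (WithBot.bot_lt_coe _)]
  intro i hi
  rw [Finset.mem_range] at hi
  have h1 : (C (f.coeff i) * (2 * X) ^ (f.natDegree - i) * (X ^ 2 + 1) ^ i).natDegree
      ≤ f.natDegree + i := by
    refine le_trans (natDegree_mul_le) ?_
    have a1 : ((2 : F[X]) * X).natDegree ≤ 1 :=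
      le_trans natDegree_mul_le (by simp)
    have a2 : (((2 : F[X]) * X) ^ (f.natDegree - i)).natDegree ≤ f.natDegree - i := by
      rw [natDegree_pow]
      calc (f.natDegree - i) * ((2 : F[X]) * X).natDegree ≤ (f.natDegree - i) * 1 :=
            Nat.mul_le_mul_left _ a1
        _ = f.natDegree - i := Nat.mul_one _
    have a3 : (((X : F[X]) ^ 2 + 1) ^ i).natDegree ≤ 2 * i := by
      rw [natDegree_pow]
      have : ((X : F[X]) ^ 2 + 1).natDegree ≤ 2 :=
        le_trans (natDegree_add_le _ _) (by simp)
      calc i * ((X : F[X]) ^ 2 + 1).natDegree ≤ i * 2 := Nat.mul_le_mul_left _ this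
        _ = 2 * i := Nat.mul_comm _ _
    calc (C (f.coeff i) * (2 * X) ^ (f.natDegree - i)).natDegree
          + (((X : F[X]) ^ 2 + 1) ^ i).natDegree
        ≤ ((C (f.coeff i)).natDegree + (((2 : F[X]) * X) ^ (f.natDegree - i)).natDegree) + 2 * i :=
          Nat.add_le_add natDegree_mul_le a3
      _ ≤ (0 + (f.natDegree - i)) + 2 * i := by
          exact Nat.add_le_add (Nat.add_le_add (by simp) a2) le_rfl
      _ ≤ f.natDegree + i := by omega
  refine lt_of_le_of_lt (degree_le_natDegree) ?_
  have : f.natDegree + i < 2 * f.natDegree := by omega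
  exact_mod_cast Nat.cast_lt.mpr (lt_of_le_of_lt h1 this)

lemma Rtransform_monic {F : Type*} [Field F] (f : F[X]) (hm : f.Monic) :
    (Rtransform f).Monic := by
  rw [Rtransform_eq_add f hm]
  have hg : ((X : F[X]) ^ 2 + 1).Monic := by
    have := monic_X_pow_add_C (R := F) (1 : F) (two_ne_zero)
    simpa using this
  refine (hg.pow _).add_of_left ?_
  have hdeg : (((X : F[X]) ^ 2 + 1) ^ f.natDegree).degree = ((2 * f.natDegree : ℕ) : WithBot ℕ) := by
    rw [degree_eq_natDegree (hg.pow _).ne_zero, natDegree_pow]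
    norm_cast
    have : ((X : F[X]) ^ 2 + 1).natDegree = 2 := by
      have := natDegree_X_pow_add_C (R := F) (n := 2) (r := 1)
      simpa using this
    rw [this]; ring
  rw [hdeg]
  exact Rtransform_tail_degree f

lemma Rtransform_natDegree {F : Type*} [Field F] (f : F[X]) (hm : f.Monic) :
    (Rtransform f).natDegree = 2 * f.natDegree := by
  rw [Rtransform_eq_add f hm]
  have hg : ((X : F[X]) ^ 2 + 1).Monic := by
    have := monic_X_pow_add_C (R := F) (1 : F) (two_ne_zero)
    simpa using this
  have h2 : (((X : F[X]) ^ 2 + 1) ^ f.natDegree).natDegree = 2 * f.natDegree := by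
    rw [natDegree_pow]
    have : ((X : F[X]) ^ 2 + 1).natDegree = 2 := by
      have := natDegree_X_pow_add_C (R := F) (n := 2) (r := 1)
      simpa using this
    rw [this]; ring
  have hdeg : (((X : F[X]) ^ 2 + 1) ^ f.natDegree).degree = ((2 * f.natDegree : ℕ) : WithBot ℕ) := by
    rw [degree_eq_natDegree (hg.pow _).ne_zero, h2]
  rw [natDegree_add_eq_left_of_degree_lt (by rw [hdeg]; exact Rtransform_tail_degree f)]
  exact h2

lemma Rtransform_coeff_zero {F : Type*} [Field F] (f : F[X]) (hm : f.Monic)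
    (hn : 1 ≤ f.natDegree) : (Rtransform f).coeff 0 = 1 := by
  rw [coeff_zero_eq_eval_zero, Rtransform, eval_finset_sum, Finset.sum_range_succ]
  have h1 : ∀ i ∈ Finset.range f.natDegree,
      eval 0 (C (f.coeff i) * (2 * X) ^ (f.natDegree - i) * (X ^ 2 + 1) ^ i) = 0 := by
    intro i hi
    rw [Finset.mem_range] at hi
    have : f.natDegree - i ≠ 0 := by omega
    simp [eval_pow, this, zero_pow]
  rw [Finset.sum_eq_zero h1, zero_add, hm.coeff_natDegree]
  simp





lemma theta_zero {K : Type*} [Field K] : theta (0 : K) = 0 := by simp [theta]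

lemma theta_phi {K : Type*} [Field K] (h2 : (2 : K) ≠ 0) {v : K}
    (h1 : v ≠ 1) (hm1 : v ≠ -1) (h0 : v ≠ 0) :
    theta ((v + 1) / (v - 1)) = (v ^ 2 + 1) / (v ^ 2 - 1) := by
  have hv1 : v - 1 ≠ 0 := sub_ne_zero.mpr h1
  have hv2 : v + 1 ≠ 0 := fun h => hm1 (eq_neg_of_add_eq_zero_left h)
  have hsq : v ^ 2 - 1 ≠ 0 := by
    intro h
    have : (v - 1) * (v + 1) = 0 := by ring_nf; linear_combination h
    rcases mul_eq_zero.mp this with h' | h'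
    · exact hv1 h'
    · exact hv2 h'
  rw [theta]
  rw [div_eq_div_iff (by exact h2) hsq]
  field_simp
  ring

lemma not_thetaPeriodic_of_even_orderOf {K : Type*} [Field K] (h2 : (2 : K) ≠ 0) {v : K}
    (h0 : v ≠ 0) (h1 : v ≠ 1) (hm1 : v ≠ -1) (hev : Even (orderOf v)) :
    ¬ IsThetaPeriodic ((v + 1) / (v - 1)) := by
  rintro ⟨k, hk, hper⟩
  set y := (v + 1) / (v - 1) with hy_def
  have hv1 : v - 1 ≠ 0 := sub_ne_zero.mpr h1
  have hv2 : v + 1 ≠ 0 := fun h => hm1 (eq_neg_of_add_eq_zero_left h)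
  have hy0 : y ≠ 0 := div_ne_zero hv2 hv1
  have key : ∀ j : ℕ, (theta^[j] y = (v ^ 2 ^ j + 1) / (v ^ 2 ^ j - 1) ∧
      v ^ 2 ^ j ≠ 1 ∧ v ^ 2 ^ j ≠ -1) ∨ theta^[j] y = 0 := by
    intro j
    induction j with
    | zero => left; simpa [hy_def] using (⟨h1, hm1⟩ : v ≠ 1 ∧ v ≠ -1)
    | succ j ih =>
      rcases ih with ⟨hy, hw1, hwm1⟩ | hy
      · set w := v ^ 2 ^ j with hw_def
        have hw0 : w ≠ 0 := pow_ne_zero _ h0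
        have hstep : theta^[j + 1] y = (w ^ 2 + 1) / (w ^ 2 - 1) := by
          rw [Function.iterate_succ_apply', hy, theta_phi h2 hw1 hwm1 hw0]
        have hpow : v ^ 2 ^ (j + 1) = w ^ 2 := by
          rw [hw_def, ← pow_mul, pow_succ]
        by_cases hc : w ^ 2 = -1
        · right; rw [hstep, hc]; norm_num
        · left
          have hne1 : w ^ 2 ≠ 1 := by
            intro h
            have : (w - 1) * (w + 1) = 0 := by linear_combination h
            rcases mul_eq_zero.mp this with h' | h'
            · exact hw1 (by linear_combination h')
            · exact hwm1 (by linear_combination h')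
          exact ⟨by rw [hstep, hpow], by rwa [hpow], by rwa [hpow]⟩
      · right; rw [Function.iterate_succ_apply', hy, theta_zero]
  rcases key k with ⟨hyk, hw1, _⟩ | hyk
  · rw [hper] at hyk
    have hw1' : v ^ 2 ^ k - 1 ≠ 0 := sub_ne_zero.mpr hw1
    have hcross : (v + 1) * (v ^ 2 ^ k - 1) = (v ^ 2 ^ k + 1) * (v - 1) := by
      rw [hy_def] at hyk
      exact (div_eq_div_iff hv1 hw1').mp hyk
    have hvv : v ^ 2 ^ k = v := by
      have h2v : 2 * (v ^ 2 ^ k) = 2 * v := by linear_combination hcross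
      exact mul_left_cancel₀ h2 h2v
    have hpow1 : v ^ (2 ^ k - 1) = 1 := by
      have hs : v ^ (2 ^ k - 1) * v = 1 * v := by
        rw [one_mul, ← pow_succ]
        have : 2 ^ k - 1 + 1 = 2 ^ k := by
          have : 1 ≤ 2 ^ k := Nat.one_le_two_pow
          omega
        rw [this, hvv]
      exact mul_right_cancel₀ h0 hs
    have hdvd : orderOf v ∣ 2 ^ k - 1 := orderOf_dvd_of_pow_eq_one hpow1
    have hodd : Odd (2 ^ k - 1) := by
      have h1le : 1 ≤ 2 ^ k := Nat.one_le_two_pow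
      have heven : Even (2 ^ k) := (Nat.even_pow).mpr ⟨even_two, by omega⟩
      exact Nat.Even.sub_odd h1le heven odd_one
    have : Even (2 ^ k - 1) := (even_iff_two_dvd).mpr (dvd_trans hev.two_dvd hdvd)
    exact (Nat.not_even_iff_odd.mpr hodd) this
  · rw [hper] at hyk
    exact hy0 hyk











lemma two_ne_zero_of_charP {A : Type*} [Field A] (p : ℕ) [Fact p.Prime] [CharP A p]
    (hodd : Odd p) : (2 : A) ≠ 0 := by
  intro h
  have h2 : ((2 : ℕ) : A) = 0 := by exact_mod_cast h
  have hdvd : p ∣ 2 := (CharP.cast_eq_zero_iff A p 2).mp h2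
  have hp2 : p = 2 := (Nat.prime_dvd_prime_iff_eq (Fact.out) Nat.prime_two).mp hdvd
  rw [hp2] at hodd
  exact (Nat.not_odd_iff_even.mpr even_two) hodd

/-- Let `p` be an odd prime and `f ∈ F_p[X]` monic irreducible of degree `n ≥ 1` with
`f ≠ X−1` and `f ≠ X+1`. If `f^R` is not irreducible, then `f^R` has a nonzero root
`α ∈ F_{p^n}` which is not θ-periodic. -/
theorem Rtransform_has_nonperiodic_root (p : ℕ) [Fact p.Prime] (hodd : Odd p)
    (f : Polynomial (ZMod p)) (n : ℕ) (hn : 1 ≤ n)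
    (hmonic : f.Monic) (hirr : Irreducible f) (hdeg : f.natDegree = n)
    (hXsub : f ≠ X - 1) (hXadd : f ≠ X + 1)
    (hnotirr : ¬ Irreducible (Rtransform f)) :
    ∃ α : GaloisField p n, α ≠ 0 ∧
      Polynomial.aeval α (Rtransform f) = 0 ∧ ¬ IsThetaPeriodic α := by
  set F := ZMod p
  set K := GaloisField p n with hK
  have hRmonic : (Rtransform f).Monic := Rtransform_monic f hmonic
  have hR0 : Rtransform f ≠ 0 := hRmonic.ne_zero
  have hRdeg : (Rtransform f).natDegree = 2 * n := by rw [Rtransform_natDegree f hmonic, hdeg]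
  -- get a monic irreducible factor
  obtain ⟨q, hqm, hqirr, hqdvd⟩ := (Rtransform f).exists_monic_irreducible_factor
    (not_isUnit_of_natDegree_pos _ (by omega))
  haveI : Fact (Irreducible q) := ⟨hqirr⟩
  set L := AdjoinRoot q with hL
  haveI : CharP L p := charP_of_injective_algebraMap (algebraMap F L).injective p
  have h2L : (2 : L) ≠ 0 := two_ne_zero_of_charP p hodd
  set x := AdjoinRoot.root q with hx
  have hxq : aeval x q = 0 := by rw [AdjoinRoot.aeval_eq, AdjoinRoot.mk_self]
  have haevalR : aeval x (Rtransform f) = 0 := by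
    obtain ⟨c, hc⟩ := hqdvd
    rw [hc, map_mul, hxq, zero_mul]
  have hx0 : x ≠ 0 := by
    intro hx0
    rw [hx0, aeval_def, eval₂_at_zero, Rtransform_coeff_zero f hmonic (by omega), map_one] at haevalR
    exact one_ne_zero haevalR
  have h2x : (2 : L) * x ≠ 0 := mul_ne_zero h2L hx0
  obtain ⟨α, hxa⟩ : ∃ a : L, x ^ 2 + 1 = 2 * x * a :=
    ⟨(x ^ 2 + 1) * (2 * x)⁻¹, by field_simp⟩
  have hαf : aeval α f = 0 := by
    have h := aeval_Rtransform_eq f hxa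
    rw [haevalR] at h
    rcases mul_eq_zero.mp h.symm with h' | h'
    · exact absurd h' (pow_ne_zero _ h2x)
    · exact h'
  have hfmin : f = minpoly F α := minpoly.eq_of_irreducible_of_monic hirr hαf hmonic
  have hq0 : q ≠ 0 := hqirr.ne_zero
  haveI : Module.Finite F L := Module.Finite.of_basis (AdjoinRoot.powerBasis hq0).basis
  have hfr : Module.finrank F L = q.natDegree := by
    rw [(AdjoinRoot.powerBasis hq0).finrank, AdjoinRoot.powerBasis_dim]
  have hint : IsIntegral F α := IsIntegral.of_finite F α
  have hEn : Module.finrank F (IntermediateField.adjoin F {α}) = n := by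
    rw [IntermediateField.adjoin.finrank hint, ← hfmin, hdeg]
  have hdvd_n : n ∣ Module.finrank F L := by
    have h := Module.finrank_mul_finrank F (IntermediateField.adjoin F {α}) L
    exact ⟨Module.finrank (IntermediateField.adjoin F {α}) L, by rw [← h, hEn]⟩
  have hd_pos : 0 < q.natDegree := hqirr.natDegree_pos
  have hd_le : q.natDegree ≤ 2 * n := by
    have := natDegree_le_of_dvd hqdvd hR0
    omega
  obtain ⟨m, hm2⟩ := hdvd_n
  rw [hfr] at hm2
  have hm_pos : 1 ≤ m := by
    rcases Nat.eq_zero_or_pos m with h | h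
    · rw [h, mul_zero] at hm2; omega
    · exact h
  have hm_le : m ≤ 2 := by
    by_contra hgt
    push_neg at hgt
    have h3 : n * 3 ≤ n * m := Nat.mul_le_mul_left n hgt
    omega
  rcases (by omega : m = 1 ∨ m = 2) with hm1 | hm1
  · -- main case : q has degree n
    rw [hm1, mul_one] at hm2
    haveI : Finite L := Module.finite_of_finite F
    haveI : Fintype L := Fintype.ofFinite L
    have hcardL : Fintype.card L = p ^ n := by
      rw [Module.card_eq_pow_finrank (K := F) (V := L), ZMod.card, hfr, hm2]
    haveI : Fintype K := Fintype.ofFinite K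
    have hcardK : Fintype.card K = p ^ n := by
      rw [← Nat.card_eq_fintype_card, GaloisField.card p n (by omega : n ≠ 0)]
    have e := FiniteField.algEquivOfCardEq (K := L) (K' := K) p (by rw [hcardL, hcardK])
    set β : K := e x with hβdef
    have hβ0 : β ≠ 0 := by
      intro h
      exact hx0 (e.injective (by rw [map_zero]; exact h))
    have haevalβ : aeval β (Rtransform f) = 0 := by
      rw [hβdef, aeval_algHom_apply e x, haevalR, map_zero]
    have h2K : (2 : K) ≠ 0 := two_ne_zero_of_charP p hodd
    have h2β : (2 : K) * β ≠ 0 := mul_ne_zero h2K hβ0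
    clear_value β
    obtain ⟨aK, hβa⟩ : ∃ a : K, β ^ 2 + 1 = 2 * β * a :=
      ⟨(β ^ 2 + 1) * (2 * β)⁻¹, by rw [mul_comm (β ^ 2 + 1), ← mul_assoc, mul_inv_cancel₀ h2β, one_mul]⟩
    have haKf : aeval aK f = 0 := by
      have h := aeval_Rtransform_eq f hβa
      rw [haevalβ] at h
      rcases mul_eq_zero.mp h.symm with h' | h'
      · exact absurd h' (pow_ne_zero _ h2β)
      · exact h'
    have hfminK : f = minpoly F aK := minpoly.eq_of_irreducible_of_monic hirr haKf hmonic
    -- β ≠ 1 and β ≠ -1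
    have hβ1 : β ≠ 1 := by
      intro h
      rw [h] at hβa
      have haK1 : aK = 1 := by
        have : (2 : K) * aK = 2 * 1 := by rw [mul_one]; linear_combination -hβa
        exact mul_left_cancel₀ h2K this
      rw [haK1] at hfminK
      rw [minpoly.one] at hfminK
      exact hXsub (by rw [hfminK])
    have hβm1 : β ≠ -1 := by
      intro h
      rw [h] at hβa
      have haK1 : aK = -1 := by
        have : (2 : K) * aK = 2 * (-1) := by linear_combination hβa
        exact mul_left_cancel₀ h2K this
      rw [haK1] at hfminK
      have h1 : ((X : F[X]) + 1) = X - C (-1) := by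
        rw [map_neg, map_one, sub_neg_eq_add]
      have hm1min : ((X : F[X]) - C (-1)) = minpoly F (-1 : K) :=
        minpoly.eq_of_irreducible_of_monic (irreducible_X_sub_C (-1 : F))
          (by simp) (monic_X_sub_C _)
      rw [← hm1min, ← h1] at hfminK
      exact hXadd hfminK
    -- also β⁻¹ is a root
    have hβia : (β⁻¹) ^ 2 + 1 = 2 * β⁻¹ * aK := by
      have hi : β * β⁻¹ = 1 := mul_inv_cancel₀ hβ0
      linear_combination β⁻¹ ^ 2 * hβa - (1 + β * β⁻¹ - 2 * β⁻¹ * aK) * hi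
    have haevalβi : aeval β⁻¹ (Rtransform f) = 0 := by
      rw [aeval_Rtransform_eq f hβia, haKf, mul_zero]
    -- the conjugating element u
    have hβs1 : β - 1 ≠ 0 := sub_ne_zero.mpr hβ1
    have hβp1 : β + 1 ≠ 0 := fun h => hβm1 (eq_neg_of_add_eq_zero_left h)
    obtain ⟨u, hudef⟩ : ∃ u : K, u = (β + 1) / (β - 1) := ⟨_, rfl⟩
    have hu0 : u ≠ 0 := by rw [hudef]; exact div_ne_zero hβp1 hβs1
    have huβ : u * (β - 1) = β + 1 := by rw [hudef]; exact div_mul_cancel₀ _ hβs1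
    have hu1 : u ≠ 1 := by
      intro h
      rw [h, one_mul] at huβ
      have : (2 : K) = 0 := by linear_combination -huβ
      exact h2K this
    have hum1 : u ≠ -1 := by
      intro h
      rw [h] at huβ
      have : β = 0 := by
        have h2 : (2 : K) * β = 0 := by linear_combination -huβ
        rcases mul_eq_zero.mp h2 with h' | h'
        · exact absurd h' h2K
        · exact h'
      exact hβ0 this
    have hβu : β = (u + 1) / (u - 1) := by
      rw [eq_div_iff (sub_ne_zero.mpr hu1)]
      linear_combination huβ
    have hβiu : β⁻¹ = (-u + 1) / (-u - 1) := by
      rw [eq_div_iff (show -u - 1 ≠ 0 by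
        intro h; exact hum1 (by linear_combination -h))]
      have hi : β * β⁻¹ = 1 := mul_inv_cancel₀ hβ0
      linear_combination β⁻¹ * huβ + (1 - u) * hi
    have hpar : Even (orderOf u) ∨ Even (orderOf (-u)) := by
      by_contra hcon
      push_neg at hcon
      obtain ⟨ha, hb⟩ := hcon
      rw [Nat.not_even_iff_odd] at ha hb
      have h1 : u ^ (orderOf u * orderOf (-u)) = 1 := by
        rw [pow_mul, pow_orderOf_eq_one, one_pow]
      have h2' : (-u) ^ (orderOf u * orderOf (-u)) = 1 := by
        rw [mul_comm, pow_mul, pow_orderOf_eq_one, one_pow]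
      have hmul : Odd (orderOf u * orderOf (-u)) := ha.mul hb
      rw [hmul.neg_pow, h1] at h2'
      exact h2K (by linear_combination -h2')
    rcases hpar with hev | hev
    · refine ⟨β, hβ0, haevalβ, ?_⟩
      rw [hβu]
      exact not_thetaPeriodic_of_even_orderOf h2K hu0 hu1 hum1 hev
    · refine ⟨β⁻¹, inv_ne_zero hβ0, haevalβi, ?_⟩
      rw [hβiu]
      exact not_thetaPeriodic_of_even_orderOf h2K (neg_ne_zero.mpr hu0)
        (fun h => hum1 (by linear_combination -h))
        (fun h => hu1 (by linear_combination -h)) hev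
  · -- q has degree 2n, so Rtransform f = q is irreducible, contradiction
    rw [hm1] at hm2
    obtain ⟨c, hc⟩ := hqdvd
    have hc0 : c ≠ 0 := by
      rintro rfl
      rw [mul_zero] at hc
      exact hR0 hc
    have hdeg_eq : (Rtransform f).natDegree = q.natDegree + c.natDegree := by
      rw [hc, natDegree_mul hq0 hc0]
    have hcdeg : c.natDegree = 0 := by omega
    have hlc : (Rtransform f).leadingCoeff = q.leadingCoeff * c.leadingCoeff := by
      rw [hc, leadingCoeff_mul]
    rw [hRmonic.leadingCoeff, hqm.leadingCoeff, one_mul] at hlc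
    have hc1 : c = 1 := by
      rw [eq_C_of_natDegree_eq_zero hcdeg]
      rw [leadingCoeff, hcdeg] at hlc
      rw [← hlc, map_one]
    rw [hc1, mul_one] at hc
    exact absurd (show Irreducible (Rtransform f) by rw [hc]; exact hqirr) hnotirr
end

section
/- Let f = X^n + a_{n−1}X^{n−1} + ... + a_1 X + 1 ∈ F_2[X] be an irreducible polynomial of degree n over the field F_2 with two elements, with a_{n−1} = a_1 = 1. Then the Q-transform f^Q is an irreducible polynomial over F_2 of degree 2n, and f^Q is self-reciprocal: the coefficient of X^i in f^Q equals the coefficient of X^{2n−i} for every 0 ≤ i ≤ 2n. -/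
open Polynomial

/-- The Q-transform of a polynomial `f = Σ aᵢ Xⁱ` of degree `n`:
`f^Q = Σ aᵢ X^{n−i} (X²+1)ⁱ`, of degree `2n`, satisfying `f^Q(x) = xⁿ · f(x + x⁻¹)`
for nonzero `x`. -/
noncomputable def Qtransform {F : Type*} [Field F] (f : Polynomial F) : Polynomial F :=
  ∑ i ∈ Finset.range (f.natDegree + 1),
    C (f.coeff i) * X ^ (f.natDegree - i) * (X ^ 2 + 1) ^ i

variable {F : Type*} [Field F]

lemma qt_aeval {A : Type*} [CommRing A] [Algebra F A] (f : Polynomial F) (α β : A)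
    (h : α * β = α ^ 2 + 1) :
    aeval α (Qtransform f) = α ^ f.natDegree * aeval β f := by
  rw [Qtransform, map_sum, aeval_eq_sum_range, Finset.mul_sum]
  refine Finset.sum_congr rfl fun i hi => ?_
  rw [Finset.mem_range, Nat.lt_succ_iff] at hi
  have key : α ^ (f.natDegree - i) * (α ^ 2 + 1) ^ i = α ^ f.natDegree * β ^ i := by
    rw [← h, mul_pow, ← mul_assoc, ← pow_add, Nat.sub_add_cancel hi]
  rw [map_mul, map_mul, aeval_C, map_pow, aeval_X, map_pow, map_add, map_pow, aeval_X, map_one,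
    Algebra.smul_def, mul_assoc, key]
  ring

lemma qt_reflect (f : Polynomial F) :
    reflect (2 * f.natDegree) (Qtransform f) = Qtransform f := by
  have hpow : ∀ i : ℕ, reflect (2 * i) ((X ^ 2 + 1 : Polynomial F) ^ i) = (X ^ 2 + 1) ^ i := by
    intro i
    induction i with
    | zero => simp
    | succ i ih =>
      have h2 : reflect 2 (X ^ 2 + 1 : Polynomial F) = X ^ 2 + 1 := by
        have : (X ^ 2 + 1 : Polynomial F) = C 1 * X ^ 2 + C 1 * X ^ 0 := by simp
        rw [this, reflect_add, reflect_C_mul_X_pow, reflect_C_mul_X_pow,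
          revAt_le (by norm_num : (2:ℕ) ≤ 2), revAt_le (by norm_num : (0:ℕ) ≤ 2)]
        simp [add_comm]
      have hb : ((X ^ 2 + 1 : Polynomial F) ^ i).natDegree ≤ 2 * i := by
        refine natDegree_pow_le.trans ?_
        have : (X ^ 2 + 1 : Polynomial F).natDegree ≤ 2 := by compute_degree
        nlinarith
      calc reflect (2 * (i + 1)) ((X ^ 2 + 1 : Polynomial F) ^ (i + 1))
          = reflect (2 * i + 2) ((X ^ 2 + 1 : Polynomial F) ^ i * (X ^ 2 + 1)) := by
            rw [pow_succ]; ring_nf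
        _ = (X ^ 2 + 1) ^ i * (X ^ 2 + 1) := by
            rw [reflect_mul _ _ hb (by compute_degree : (X ^ 2 + 1 : Polynomial F).natDegree ≤ 2),
              ih, h2]
        _ = (X ^ 2 + 1) ^ (i + 1) := (pow_succ _ _).symm
  have hsum : ∀ (N : ℕ) (s : Finset ℕ) (g : ℕ → Polynomial F),
      reflect N (∑ i ∈ s, g i) = ∑ i ∈ s, reflect N (g i) := by
    classical
    intro N s g
    induction s using Finset.induction with
    | empty => simp
    | insert _ _ h ih => simp [Finset.sum_insert h, reflect_add, ih]
  rw [Qtransform, hsum]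
  refine Finset.sum_congr rfl fun i hi => ?_
  rw [Finset.mem_range, Nat.lt_succ_iff] at hi
  rw [show 2 * f.natDegree = (2 * f.natDegree - 2 * i) + 2 * i from by omega]
  rw [reflect_mul _ _ ?_ ?_]
  · rw [hpow, reflect_C_mul_X_pow, revAt_le (by omega : f.natDegree - i ≤ 2 * f.natDegree - 2 * i),
      show 2 * f.natDegree - 2 * i - (f.natDegree - i) = f.natDegree - i from by omega]
  · exact (natDegree_C_mul_le _ _).trans (by rw [natDegree_X_pow]; omega)
  · refine natDegree_pow_le.trans ?_
    have : (X ^ 2 + 1 : Polynomial F).natDegree ≤ 2 := by compute_degree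
    nlinarith

lemma qt_natDegree_le (f : Polynomial F) : (Qtransform f).natDegree ≤ 2 * f.natDegree := by
  refine natDegree_sum_le_of_forall_le _ _ fun i hi => ?_
  rw [Finset.mem_range, Nat.lt_succ_iff] at hi
  refine natDegree_mul_le.trans ?_
  have h1 : (C (f.coeff i) * X ^ (f.natDegree - i) : Polynomial F).natDegree ≤ f.natDegree - i :=
    (natDegree_C_mul_le _ _).trans (by rw [natDegree_X_pow])
  have h2 : ((X ^ 2 + 1 : Polynomial F) ^ i).natDegree ≤ 2 * i := by
    refine natDegree_pow_le.trans ?_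
    have : (X ^ 2 + 1 : Polynomial F).natDegree ≤ 2 := by compute_degree
    nlinarith
  omega

lemma monic_Xsq_add_one : ((X : Polynomial F) ^ 2 + 1).Monic := by
  have : ((X : Polynomial F) ^ 2 + 1) = X ^ 2 + C 1 := by simp
  rw [this]
  exact monic_X_pow_add_C _ two_ne_zero

lemma qt_coeff_top {f : Polynomial F} (hm : f.Monic) :
    (Qtransform f).coeff (2 * f.natDegree) = 1 := by
  rw [Qtransform, finset_sum_coeff, Finset.sum_range_succ]
  have hlast : (C (f.coeff f.natDegree) * X ^ (f.natDegree - f.natDegree) *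
      (X ^ 2 + 1 : Polynomial F) ^ f.natDegree).coeff (2 * f.natDegree) = 1 := by
    rw [Nat.sub_self, pow_zero, mul_one, hm.coeff_natDegree, map_one, one_mul]
    have hmon : ((X ^ 2 + 1 : Polynomial F) ^ f.natDegree).Monic := monic_Xsq_add_one.pow _
    have hdeg : ((X ^ 2 + 1 : Polynomial F) ^ f.natDegree).natDegree = 2 * f.natDegree := by
      rw [monic_Xsq_add_one.natDegree_pow]
      have : (X ^ 2 + 1 : Polynomial F).natDegree = 2 := by compute_degree!
      rw [this]; ring
    rw [← hdeg]
    exact hmon.coeff_natDegree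
  rw [hlast, Finset.sum_eq_zero, zero_add]
  intro i hi
  rw [Finset.mem_range] at hi
  refine coeff_eq_zero_of_natDegree_lt ?_
  have h1 : (C (f.coeff i) * X ^ (f.natDegree - i) : Polynomial F).natDegree ≤ f.natDegree - i :=
    (natDegree_C_mul_le _ _).trans (by rw [natDegree_X_pow])
  have h2 : ((X ^ 2 + 1 : Polynomial F) ^ i).natDegree ≤ 2 * i := by
    refine natDegree_pow_le.trans ?_
    have : (X ^ 2 + 1 : Polynomial F).natDegree ≤ 2 := by compute_degree
    nlinarith
  have := natDegree_mul_le (p := C (f.coeff i) * X ^ (f.natDegree - i))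
    (q := (X ^ 2 + 1 : Polynomial F) ^ i)
  omega

lemma qt_natDegree {f : Polynomial F} (hm : f.Monic) :
    (Qtransform f).natDegree = 2 * f.natDegree :=
  le_antisymm (qt_natDegree_le f)
    (le_natDegree_of_ne_zero (by rw [qt_coeff_top hm]; exact one_ne_zero))

lemma qt_monic {f : Polynomial F} (hm : f.Monic) : (Qtransform f).Monic := by
  rw [Monic, leadingCoeff, qt_natDegree hm, qt_coeff_top hm]

open CharTwo in
lemma meyn_no_root (f : Polynomial (ZMod 2)) (hmonic : f.Monic) (hn : 1 ≤ f.natDegree)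
    (hirr : Irreducible f) (hc0 : f.coeff 0 = 1) (hc1 : f.coeff 1 = 1)
    (a : AdjoinRoot f) : a ^ 2 + AdjoinRoot.root f * a + 1 ≠ 0 := by
  haveI := Fact.mk hirr
  set β := AdjoinRoot.root f with hβdef
  have hf0 : f ≠ 0 := hmonic.ne_zero
  haveI : Module.Finite (ZMod 2) (AdjoinRoot f) := (AdjoinRoot.powerBasis hf0).finite
  haveI : CharP (AdjoinRoot f) 2 := charP_of_injective_algebraMap (algebraMap (ZMod 2) (AdjoinRoot f)).injective 2
  haveI : Finite (AdjoinRoot f) := Module.finite_of_finite (ZMod 2)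
  have hβaeval : aeval β f = 0 := by rw [AdjoinRoot.aeval_eq, AdjoinRoot.mk_self]
  have hβ0 : β ≠ 0 := by
    intro h
    rw [h, aeval_def, eval₂_at_zero, hc0, map_one] at hβaeval
    exact one_ne_zero hβaeval
  haveI := invertibleOfNonzero hβ0
  have hrev0 : aeval β⁻¹ (reverse f) = 0 := by
    have := (eval₂_reverse_eq_zero_iff (algebraMap (ZMod 2) (AdjoinRoot f)) β f).mpr
      (by rw [← aeval_def]; exact hβaeval)
    rwa [invOf_eq_inv, ← aeval_def] at this
  have htd : f.natTrailingDegree = 0 := by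
    rw [natTrailingDegree_eq_zero]
    exact Or.inr (by rw [hc0]; exact one_ne_zero)
  have hrevdeg : (reverse f).natDegree = f.natDegree := by
    rw [reverse_natDegree, htd, Nat.sub_zero]
  have hrevmonic : (reverse f).Monic := by
    rw [Monic, reverse_leadingCoeff]
    unfold trailingCoeff
    rw [htd, hc0]
  have hint : IsIntegral (ZMod 2) (β⁻¹ : (AdjoinRoot f)) := IsIntegral.of_finite (ZMod 2) (β⁻¹ : AdjoinRoot f)
  have hc0rev : (reverse f).coeff 0 = 1 := by
    rw [coeff_reverse, revAt_le (Nat.zero_le _), Nat.sub_zero]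
    exact hmonic.coeff_natDegree
  have h1 : β⁻¹ * aeval β⁻¹ ((reverse f).divX) + 1 = 0 := by
    have := congrArg (aeval (β⁻¹ : (AdjoinRoot f))) (X_mul_divX_add (reverse f))
    rw [map_add, map_mul, aeval_X, aeval_C, hc0rev, map_one, hrev0] at this
    exact this
  have h2 : aeval β⁻¹ ((reverse f).divX) = β := by
    have hm1 : β⁻¹ * aeval β⁻¹ ((reverse f).divX) = 1 := by
      have h2z : (2 : (AdjoinRoot f)) = 0 := two_eq_zero
      linear_combination h1 - h2z
    exact ((inv_mul_eq_one₀ hβ0).mp hm1).symm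
  have hmem : (AdjoinRoot.powerBasis hf0).gen ∈ Algebra.adjoin (ZMod 2) ({β⁻¹} : Set (AdjoinRoot f)) := by
    rw [AdjoinRoot.powerBasis_gen, ← hβdef]
    have := Polynomial.aeval_mem_adjoin_singleton (ZMod 2) (x := (β⁻¹ : AdjoinRoot f))
      (p := (reverse f).divX)
    rwa [h2] at this
  have hdvd : minpoly (ZMod 2) (β⁻¹ : (AdjoinRoot f)) ∣ reverse f := minpoly.dvd _ _ hrev0
  have hdm : (minpoly (ZMod 2) (β⁻¹ : (AdjoinRoot f))).natDegree = f.natDegree := by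
    have e1 := (PowerBasis.ofAdjoinEqTop hint (PowerBasis.adjoin_eq_top_of_gen_mem_adjoin hmem)).natDegree_minpoly
    have e2 := (PowerBasis.ofAdjoinEqTop hint (PowerBasis.adjoin_eq_top_of_gen_mem_adjoin hmem)).finrank
    have e3 := (AdjoinRoot.powerBasis hf0).finrank
    rw [PowerBasis.ofAdjoinEqTop_gen] at e1
    rw [e1, ← e2, e3, AdjoinRoot.powerBasis_dim]
  have hminpoly : minpoly (ZMod 2) (β⁻¹ : (AdjoinRoot f)) = reverse f := by
    obtain ⟨c, hc⟩ := hdvd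
    have hmm : (minpoly (ZMod 2) (β⁻¹ : (AdjoinRoot f))).Monic := minpoly.monic hint
    have hcne : c ≠ 0 := by
      rintro rfl
      rw [mul_zero] at hc
      exact hrevmonic.ne_zero hc
    have hdc : c.natDegree = 0 := by
      have := natDegree_mul (p := minpoly (ZMod 2) (β⁻¹ : (AdjoinRoot f))) (q := c) hmm.ne_zero hcne
      rw [← hc, hrevdeg, hdm] at this
      omega
    have hcl : c.coeff 0 = 1 := by
      have hlc := hrevmonic
      rw [Monic, hc, leadingCoeff_mul, hmm.leadingCoeff, one_mul, leadingCoeff, hdc] at hlc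
      exact hlc
    rw [hc, eq_C_of_natDegree_eq_zero hdc, hcl, map_one, mul_one]
  have htr : Algebra.trace (ZMod 2) (AdjoinRoot f) (β⁻¹ : (AdjoinRoot f)) = 1 := by
    have e := (PowerBasis.ofAdjoinEqTop hint (PowerBasis.adjoin_eq_top_of_gen_mem_adjoin hmem)).trace_gen_eq_nextCoeff_minpoly
    rw [PowerBasis.ofAdjoinEqTop_gen] at e
    rw [e, hminpoly, nextCoeff_of_natDegree_pos (by rw [hrevdeg]; omega), hrevdeg,
      coeff_reverse, revAt_le (by omega : f.natDegree - 1 ≤ f.natDegree),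
      show f.natDegree - (f.natDegree - 1) = 1 from by omega, hc1]
    decide
  have σcomm : ∀ c : ZMod 2, frobeniusEquiv (AdjoinRoot f) 2 (algebraMap (ZMod 2) (AdjoinRoot f) c) = algebraMap (ZMod 2) (AdjoinRoot f) c := by
    intro c
    rw [frobeniusEquiv_def, ← map_pow]
    congr 1
    revert c; decide
  have htr_sq : ∀ x : (AdjoinRoot f), Algebra.trace (ZMod 2) (AdjoinRoot f) (x ^ 2) = Algebra.trace (ZMod 2) (AdjoinRoot f) x := by
    intro x
    have := Algebra.trace_eq_of_algEquiv (AlgEquiv.ofRingEquiv σcomm) x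
    rwa [show (AlgEquiv.ofRingEquiv σcomm) x = x ^ 2 from rfl] at this
  intro h
  have hab : a ^ 2 + β * a = 1 := by
    have h2z : (2 : (AdjoinRoot f)) = 0 := two_eq_zero
    linear_combination h - h2z
  have hy : (a * β⁻¹) ^ 2 + a * β⁻¹ = (β⁻¹ : (AdjoinRoot f)) ^ 2 := by
    have e : (a * β⁻¹) ^ 2 + a * β⁻¹ = (a ^ 2 + β * a) * (β⁻¹ : (AdjoinRoot f)) ^ 2 := by
      field_simp
    rw [e, hab, one_mul]
  have htrace := congrArg (Algebra.trace (ZMod 2) (AdjoinRoot f)) hy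
  rw [map_add, htr_sq, htr_sq, htr, CharTwo.add_self_eq_zero] at htrace
  exact zero_ne_one htrace

set_option synthInstance.maxHeartbeats 1000000 in
set_option maxHeartbeats 2000000 in
/-- (Meyn) If `f = Xⁿ + a_{n−1}X^{n−1} + ⋯ + a₁X + 1` is irreducible over `F₂` with
`a_{n−1} = a₁ = 1`, then `f^Q` is a self-reciprocal irreducible polynomial over `F₂`
of degree `2n`. -/
theorem Qtransform_selfReciprocal_irreducible (f : Polynomial (ZMod 2)) (n : ℕ)
    (hn : 1 ≤ n) (hmonic : f.Monic) (hdeg : f.natDegree = n) (hirr : Irreducible f)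
    (hc0 : f.coeff 0 = 1) (hcn1 : f.coeff (n - 1) = 1) (hc1 : f.coeff 1 = 1) :
    Irreducible (Qtransform f) ∧ (Qtransform f).natDegree = 2 * n ∧
    ∀ i : ℕ, i ≤ 2 * n → (Qtransform f).coeff i = (Qtransform f).coeff (2 * n - i) := by
  subst hdeg
  refine ⟨?_, qt_natDegree hmonic, fun i hi => ?_⟩
  swap
  · conv_lhs => rw [← qt_reflect f]
    rw [coeff_reflect, revAt_le hi]
  -- Irreducibility
  have hf0 : f ≠ 0 := hmonic.ne_zero
  haveI := Fact.mk hirr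
  set β := AdjoinRoot.root f with hβdef
  have hnoroot : ∀ a : AdjoinRoot f, a ^ 2 + β * a + 1 ≠ 0 :=
    meyn_no_root f hmonic hn hirr hc0 hc1
  set q : Polynomial (AdjoinRoot f) := X ^ 2 + C β * X + 1 with hqdef
  have hq_monic : q.Monic := by
    rw [hqdef]
    monicity!
  have hq_deg : q.natDegree = 2 := by rw [hqdef]; compute_degree!
  have hq_irr : Irreducible q := by
    rw [hq_monic.irreducible_iff_roots_eq_zero_of_degree_le_three (by omega) (by omega)]
    by_contra hne
    obtain ⟨r, hr⟩ := Multiset.exists_mem_of_ne_zero hne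
    rw [mem_roots hq_monic.ne_zero] at hr
    refine hnoroot r ?_
    simpa [hqdef, IsRoot] using hr
  haveI := Fact.mk hq_irr
  haveI : Module.Finite (ZMod 2) (AdjoinRoot f) := (AdjoinRoot.powerBasis hf0).finite
  haveI : Module.Finite (AdjoinRoot f) (AdjoinRoot q) := (AdjoinRoot.powerBasis hq_monic.ne_zero).finite
  haveI : Module.Finite (ZMod 2) (AdjoinRoot q) := Module.Finite.trans (AdjoinRoot f) _
  set α := AdjoinRoot.root q with hαdef
  have hrel : α ^ 2 + algebraMap (AdjoinRoot f) (AdjoinRoot q) β * α + 1 = 0 := by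
    have h : aeval α (X ^ 2 + C β * X + 1 : Polynomial (AdjoinRoot f)) = 0 := by
      rw [← hqdef, AdjoinRoot.aeval_eq, AdjoinRoot.mk_self]
    simpa [AdjoinRoot.algebraMap_eq] using h
  have hα0 : α ≠ 0 := by
    intro h0
    rw [h0] at hrel
    simp at hrel
  haveI hCharL : CharP (AdjoinRoot q) 2 :=
    charP_of_injective_algebraMap (algebraMap (ZMod 2) (AdjoinRoot q)).injective 2
  have h2z : (2 : AdjoinRoot q) = 0 := CharTwo.two_eq_zero
  have hαβ : α * algebraMap (AdjoinRoot f) (AdjoinRoot q) β = α ^ 2 + 1 := by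
    linear_combination hrel + (-α ^ 2 - 1) * h2z
  have hP0 : aeval α (Qtransform f) = 0 := by
    rw [qt_aeval f α (algebraMap (AdjoinRoot f) (AdjoinRoot q) β) hαβ,
      aeval_algebraMap_apply, AdjoinRoot.aeval_eq, AdjoinRoot.mk_self, map_zero, mul_zero]
  have hint_α : IsIntegral (ZMod 2) α := IsIntegral.of_finite (ZMod 2) α
  have e1 : Module.finrank (ZMod 2) (AdjoinRoot f) = f.natDegree := by
    rw [(AdjoinRoot.powerBasis hf0).finrank, AdjoinRoot.powerBasis_dim]
  have e2 : Module.finrank (AdjoinRoot f) (AdjoinRoot q) = 2 := by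
    rw [(AdjoinRoot.powerBasis hq_monic.ne_zero).finrank, AdjoinRoot.powerBasis_dim, hq_deg]
  have hfinL : Module.finrank (ZMod 2) (AdjoinRoot q) = 2 * f.natDegree := by
    have h := Module.finrank_mul_finrank (ZMod 2) (AdjoinRoot f) (AdjoinRoot q)
    rw [e1, e2] at h
    omega
  set E := IntermediateField.adjoin (ZMod 2) ({α} : Set (AdjoinRoot q)) with hEdef
  have hαE : α ∈ E := IntermediateField.mem_adjoin_simple_self _ _
  have hdE : Module.finrank (ZMod 2) E = (minpoly (ZMod 2) α).natDegree :=
    IntermediateField.adjoin.finrank hint_α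
  have hβ'E : algebraMap (AdjoinRoot f) (AdjoinRoot q) β ∈ E := by
    have hrw : algebraMap (AdjoinRoot f) (AdjoinRoot q) β = (α ^ 2 + 1) * α⁻¹ := by
      rw [← hαβ]
      field_simp
    rw [hrw]
    exact mul_mem (add_mem (pow_mem hαE 2) (one_mem E)) (E.inv_mem hαE)
  have hKE : ∀ x : AdjoinRoot f, algebraMap (AdjoinRoot f) (AdjoinRoot q) x ∈ E := by
    intro x
    obtain ⟨p, rfl⟩ := AdjoinRoot.mk_surjective x
    rw [← AdjoinRoot.aeval_eq, ← aeval_algebraMap_apply]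
    have hsub : Algebra.adjoin (ZMod 2)
        ({algebraMap (AdjoinRoot f) (AdjoinRoot q) β} : Set (AdjoinRoot q)) ≤ E.toSubalgebra :=
      Algebra.adjoin_le (by simpa using hβ'E)
    exact hsub (Polynomial.aeval_mem_adjoin_singleton (ZMod 2)
      (x := algebraMap (AdjoinRoot f) (AdjoinRoot q) β) (p := p))
  -- the injective linear map K →ₗ E
  let φ : AdjoinRoot f →ₗ[ZMod 2] (Subalgebra.toSubmodule E.toSubalgebra) :=
    ((IsScalarTower.toAlgHom (ZMod 2) (AdjoinRoot f) (AdjoinRoot q)).toLinearMap).codRestrict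
      (Subalgebra.toSubmodule E.toSubalgebra) hKE
  have hφinj : Function.Injective φ := by
    intro x y hxy
    refine (algebraMap (AdjoinRoot f) (AdjoinRoot q)).injective ?_
    have := congrArg (Subtype.val) hxy
    exact this
  have hEfin : Module.finrank (ZMod 2) (Subalgebra.toSubmodule E.toSubalgebra) =
      (minpoly (ZMod 2) α).natDegree := by
    rw [Subalgebra.finrank_toSubmodule, ← hdE, IntermediateField.finrank_eq_finrank_subalgebra]
  have hn_le_d : f.natDegree ≤ (minpoly (ZMod 2) α).natDegree := by
    rw [← hEfin, ← e1]
    exact LinearMap.finrank_le_finrank_of_injective hφinj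
  have htower : Module.finrank (ZMod 2) E * Module.finrank E (AdjoinRoot q) =
      2 * f.natDegree := by
    rw [← hfinL]
    exact Module.finrank_mul_finrank (ZMod 2) E (AdjoinRoot q)
  have hm_pos : 0 < Module.finrank E (AdjoinRoot q) := Module.finrank_pos
  have hd2n : (minpoly (ZMod 2) α).natDegree = 2 * f.natDegree := by
    by_contra hne
    rw [hdE] at htower
    have hd_eq_n : (minpoly (ZMod 2) α).natDegree = f.natDegree := by
      rcases Nat.lt_or_ge (Module.finrank E (AdjoinRoot q)) 2 with hm2 | hm2
      · have hm1 : Module.finrank (↥E) (AdjoinRoot q) = 1 := by omega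
        rw [hm1, mul_one] at htower
        exact absurd htower hne
      · have h2d := Nat.mul_le_mul_left (minpoly (ZMod 2) α).natDegree hm2
        rw [htower] at h2d
        omega
    -- then φ is surjective, so α is in the image of K, contradiction
    have hfr : Module.finrank (ZMod 2) (AdjoinRoot f) =
        Module.finrank (ZMod 2) (Subalgebra.toSubmodule E.toSubalgebra) := by
      rw [e1, hEfin, hd_eq_n]
    obtain ⟨a, ha⟩ := (φ.linearEquivOfInjective hφinj hfr).surjective ⟨α, hαE⟩
    rw [LinearMap.linearEquivOfInjective_apply] at ha
    have haval : algebraMap (AdjoinRoot f) (AdjoinRoot q) a = α := by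
      have := congrArg (Subtype.val) ha
      exact this
    refine hnoroot a ?_
    apply (algebraMap (AdjoinRoot f) (AdjoinRoot q)).injective
    rw [map_add, map_add, map_one, map_pow, map_mul, haval, map_zero]
    exact hrel
  -- conclude
  have hdvdP : minpoly (ZMod 2) α ∣ Qtransform f := minpoly.dvd _ _ hP0
  have hQmonic : (Qtransform f).Monic := qt_monic hmonic
  have hQdeg : (Qtransform f).natDegree = 2 * f.natDegree := qt_natDegree hmonic
  have hmm : (minpoly (ZMod 2) α).Monic := minpoly.monic hint_α
  obtain ⟨c, hc⟩ := hdvdP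
  have hcne : c ≠ 0 := by
    rintro rfl
    rw [mul_zero] at hc
    exact hQmonic.ne_zero hc
  have hdc : c.natDegree = 0 := by
    have h := natDegree_mul (p := minpoly (ZMod 2) α) (q := c) hmm.ne_zero hcne
    rw [← hc, hQdeg, hd2n] at h
    omega
  have hcl : c.coeff 0 = 1 := by
    have hlc := hQmonic
    rw [Monic, hc, leadingCoeff_mul, hmm.leadingCoeff, one_mul, leadingCoeff, hdc] at hlc
    exact hlc
  have hQeq : Qtransform f = minpoly (ZMod 2) α := by
    rw [hc, eq_C_of_natDegree_eq_zero hdc, hcl, map_one, mul_one]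
  rw [hQeq]
  exact minpoly.irreducible hint_α
end
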